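/- arXiv:2310.10846 — 4 statements merged into one kernel-verified Lean document; each statement's English description precedes it below -/
import Mathlib

section
/- For all integers 0 ≤ j ≤ ℓ one has, in K = ℂ(q,t,Z), the flip symmetry of the Y-binomial coefficient: Bin(ℓ, ℓ−j; Z⁻¹) = t^{ℓ−2j} · Bin(ℓ, j; Z). -/
/-!
Rational-function identities over `K = ℂ(q,t,Z)` underlying the expansion of
`E_ℓ(X)𝟏₀` and `𝟏₀E_ℓ(X)𝟏₀` in the double affine Hecke algebra of type SL₂
(with `Z` playing the role of `Y⁻²`).
-/

noncomputable section

/-- The field `K = ℂ(q,t,Z)` of rational functions in three indeterminates. -/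
abbrev K : Type := FractionRing (MvPolynomial (Fin 3) ℂ)

/-- The indeterminate `q`. -/
def q : K := algebraMap (MvPolynomial (Fin 3) ℂ) K (MvPolynomial.X 0)

/-- The indeterminate `t`. -/
def t : K := algebraMap (MvPolynomial (Fin 3) ℂ) K (MvPolynomial.X 1)

/-- The indeterminate `Z` (playing the role of `Y⁻²`). -/
def Z : K := algebraMap (MvPolynomial (Fin 3) ℂ) K (MvPolynomial.X 2)

/-- The `q`-Pochhammer symbol `(a;q)_n = ∏_{i=0}^{n-1} (1 - a qⁱ)`. -/
def poch (a : K) (n : ℕ) : K := ∏ i ∈ Finset.range n, (1 - a * q ^ i)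

/-- The `q,t`-binomial coefficient `[ℓ j]_{q,t}`. -/
def qtBinom (l j : ℕ) : K :=
  (poch q l / poch t l) / ((poch q j / poch t j) * (poch q (l - j) / poch t (l - j)))

/-- The `Y`-binomial coefficient
`Bin(ℓ,j;z) = (t⁻¹z q^{−(j−1)};q)_{ℓ−j} (tz q^{ℓ−2j};q)_j / ((zq;q)_{ℓ−j} (z q^{−j};q)_j)`. -/
def Bin (l j : ℕ) (z : K) : K :=
  poch (t⁻¹ * z * q ^ (1 - (j : ℤ))) (l - j) * poch (t * z * q ^ ((l : ℤ) - 2 * j)) j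
    / (poch (z * q) (l - j) * poch (z * q ^ (-(j : ℤ))) j)

lemma q_ne : q ≠ 0 := by
  have h : Function.Injective (algebraMap (MvPolynomial (Fin 3) ℂ) K) :=
    IsFractionRing.injective _ _
  exact (map_ne_zero_iff _ h).mpr (MvPolynomial.X_ne_zero 0)

lemma t_ne : t ≠ 0 := by
  have h : Function.Injective (algebraMap (MvPolynomial (Fin 3) ℂ) K) :=
    IsFractionRing.injective _ _
  exact (map_ne_zero_iff _ h).mpr (MvPolynomial.X_ne_zero 1)

lemma Z_ne : Z ≠ 0 := by
  have h : Function.Injective (algebraMap (MvPolynomial (Fin 3) ℂ) K) :=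
    IsFractionRing.injective _ _
  exact (map_ne_zero_iff _ h).mpr (MvPolynomial.X_ne_zero 2)

/-- Flip a Pochhammer symbol with inverted argument. -/
lemma poch_inv (x : K) (hx : x ≠ 0) (e : ℤ) (n : ℕ) :
    poch (x⁻¹ * q ^ e) n
      = (∏ i ∈ Finset.range n, (-x⁻¹ * q ^ (e + i)))
        * poch (x * q ^ (1 - e - n)) n := by
  have hrev : poch (x * q ^ (1 - e - n)) n
      = ∏ i ∈ Finset.range n, (1 - x * q ^ (-e - i)) := by
    rw [poch, ← Finset.prod_range_reflect]
    refine Finset.prod_congr rfl fun i hi => ?_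
    have hi' := Finset.mem_range.mp hi
    have hc : ((n - 1 - i : ℕ) : ℤ) = (n : ℤ) - 1 - i := by omega
    rw [← zpow_natCast q (n - 1 - i), hc, mul_assoc, ← zpow_add₀ q_ne]
    congr 2
    ring
  rw [hrev, poch, ← Finset.prod_mul_distrib]
  refine Finset.prod_congr rfl fun i _ => ?_
  have h2 : q ^ (e + i) * q ^ (-e - i) = 1 := by
    rw [← zpow_add₀ q_ne]; norm_num
  have expand : (-x⁻¹ * q ^ (e + i)) * (1 - x * q ^ (-e - i))
      = -(x⁻¹ * q ^ (e + i)) + (x⁻¹ * x) * (q ^ (e + i) * q ^ (-e - i)) := by ring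
  rw [expand, inv_mul_cancel₀ hx, h2, ← zpow_natCast q i, mul_assoc, ← zpow_add₀ q_ne]
  ring

lemma div_aux (c a x y : K) (ha : a ≠ 0) : (c * a) * x / (a * y) = c * (x / y) := by
  rw [show (c * a) * x = a * (c * x) by ring, mul_div_mul_left _ _ ha, mul_div_assoc]

lemma pow_scalar (a b : ℤ) (jn kn : ℕ) :
    (t⁻¹ * q ^ a) ^ jn * (t * q ^ b) ^ kn
      = t ^ ((kn : ℤ) - jn) * q ^ (a * jn + b * kn) := by
  rw [mul_pow, mul_pow, inv_pow, ← zpow_natCast t jn, ← zpow_natCast t kn,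
    ← zpow_natCast (q ^ a) jn, ← zpow_natCast (q ^ b) kn, ← zpow_mul, ← zpow_mul,
    ← zpow_neg, zpow_sub₀ t_ne, zpow_neg, zpow_add₀ q_ne]
  ring

/-- **Flip symmetry of the `Y`-binomial coefficient**:
`Bin(ℓ, ℓ−j; Z⁻¹) = t^{ℓ−2j} · Bin(ℓ, j; Z)` for `0 ≤ j ≤ ℓ`. -/
theorem Bin_flip (l j : ℕ) (hj : j ≤ l) :
    Bin l (l - j) Z⁻¹ = t ^ ((l : ℤ) - 2 * j) * Bin l j Z := by
  unfold Bin
  have hc : ((l - j : ℕ) : ℤ) = (l : ℤ) - j := by omega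
  have hjj : l - (l - j) = j := by omega
  rw [hc, hjj]
  set K1 : K := ∏ i ∈ Finset.range j, (-(t * Z)⁻¹ * q ^ ((1 - ((l : ℤ) - j)) + i)) with hK1
  set K2 : K := ∏ i ∈ Finset.range (l - j),
      (-(t⁻¹ * Z)⁻¹ * q ^ (((l : ℤ) - 2 * ((l : ℤ) - j)) + i)) with hK2
  set K3 : K := ∏ i ∈ Finset.range j, (-Z⁻¹ * q ^ ((1 : ℤ) + i)) with hK3
  set K4 : K := ∏ i ∈ Finset.range (l - j),
      (-Z⁻¹ * q ^ ((-((l : ℤ) - j)) + i)) with hK4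
  have e1 : poch (t⁻¹ * Z⁻¹ * q ^ (1 - ((l : ℤ) - j))) j
      = K1 * poch (t * Z * q ^ ((l : ℤ) - 2 * j)) j := by
    rw [show ((l : ℤ) - 2 * j) = 1 - (1 - ((l : ℤ) - j)) - j by push_cast; ring,
      ← mul_inv t Z]
    exact poch_inv (t * Z) (mul_ne_zero t_ne Z_ne) _ j
  have e2 : poch (t * Z⁻¹ * q ^ ((l : ℤ) - 2 * ((l : ℤ) - j))) (l - j)
      = K2 * poch (t⁻¹ * Z * q ^ (1 - (j : ℤ))) (l - j) := by
    rw [show (1 - (j : ℤ)) = 1 - ((l : ℤ) - 2 * ((l : ℤ) - j)) - ((l - j : ℕ) : ℤ) by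
      push_cast [hj]; ring,
      show (t : K) * Z⁻¹ = (t⁻¹ * Z)⁻¹ by rw [mul_inv, inv_inv]]
    exact poch_inv (t⁻¹ * Z) (mul_ne_zero (inv_ne_zero t_ne) Z_ne) _ (l - j)
  have e3 : poch (Z⁻¹ * q) j = K3 * poch (Z * q ^ (-(j : ℤ))) j := by
    have h := poch_inv Z Z_ne 1 j
    rw [zpow_one, show (1 - 1 - (j : ℤ)) = -(j : ℤ) by ring] at h
    exact h
  have e4 : poch (Z⁻¹ * q ^ (-((l : ℤ) - j))) (l - j) = K4 * poch (Z * q) (l - j) := by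
    have h := poch_inv Z Z_ne (-((l : ℤ) - j)) (l - j)
    rw [show (1 - (-((l : ℤ) - j)) - ((l - j : ℕ) : ℤ)) = 1 by push_cast [hj]; ring,
      zpow_one] at h
    exact h
  rw [e1, e2, e3, e4]
  have hK34 : K3 * K4 ≠ 0 := by
    apply mul_ne_zero <;>
    · apply Finset.prod_ne_zero_iff.mpr
      intro i _
      exact mul_ne_zero (neg_ne_zero.mpr (inv_ne_zero Z_ne)) (zpow_ne_zero _ q_ne)
  have hKmul : K1 * K2 = t ^ ((l : ℤ) - 2 * j) * (K3 * K4) := by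
    have h1 : K1 = (t⁻¹ * q ^ ((j : ℤ) - l)) ^ j * K3 := by
      calc K1 = ∏ i ∈ Finset.range j,
            ((t⁻¹ * q ^ ((j : ℤ) - l)) * (-Z⁻¹ * q ^ ((1 : ℤ) + i))) := by
            refine Finset.prod_congr rfl fun i _ => ?_
            rw [mul_inv t Z, show (1 - ((l : ℤ) - j)) + (i : ℤ)
              = ((j : ℤ) - l) + ((1 : ℤ) + i) by ring, zpow_add₀ q_ne]
            ring
        _ = _ := by
            rw [Finset.prod_mul_distrib, Finset.prod_const, Finset.card_range, hK3]
    have h2 : K2 = (t * q ^ (j : ℤ)) ^ (l - j) * K4 := by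
      calc K2 = ∏ i ∈ Finset.range (l - j),
            ((t * q ^ (j : ℤ)) * (-Z⁻¹ * q ^ ((-((l : ℤ) - j)) + i))) := by
            refine Finset.prod_congr rfl fun i _ => ?_
            rw [mul_inv t⁻¹ Z, inv_inv, show ((l : ℤ) - 2 * ((l : ℤ) - j)) + (i : ℤ)
              = (j : ℤ) + ((-((l : ℤ) - j)) + i) by ring, zpow_add₀ q_ne]
            ring
        _ = _ := by
            rw [Finset.prod_mul_distrib, Finset.prod_const, Finset.card_range, hK4]
    rw [h1, h2, show ((t⁻¹ * q ^ ((j : ℤ) - l)) ^ j * K3) * ((t * q ^ (j : ℤ)) ^ (l - j) * K4)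
      = ((t⁻¹ * q ^ ((j : ℤ) - l)) ^ j * (t * q ^ (j : ℤ)) ^ (l - j)) * (K3 * K4) by ring,
      pow_scalar,
      show (((l - j : ℕ) : ℤ) - (j : ℕ)) = (l : ℤ) - 2 * j by push_cast [hj]; ring,
      show ((j : ℤ) - l) * (j : ℕ) + (j : ℤ) * ((l - j : ℕ) : ℤ) = 0 by push_cast [hj]; ring,
      zpow_zero, mul_one]
  calc K1 * poch (t * Z * q ^ ((l : ℤ) - 2 * j)) j
        * (K2 * poch (t⁻¹ * Z * q ^ (1 - (j : ℤ))) (l - j))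
        / (K3 * poch (Z * q ^ (-(j : ℤ))) j * (K4 * poch (Z * q) (l - j)))
      = (K1 * K2) * (poch (t⁻¹ * Z * q ^ (1 - (j : ℤ))) (l - j)
          * poch (t * Z * q ^ ((l : ℤ) - 2 * j)) j)
        / ((K3 * K4) * (poch (Z * q) (l - j) * poch (Z * q ^ (-(j : ℤ))) j)) := by ring
    _ = _ := by rw [hKmul]; exact div_aux _ _ _ _ hK34



end
end

section
/- For all integers ℓ ≥ 1 and 0 ≤ j ≤ ℓ one has, in K = ℂ(q,t,Z): (qt)^j · Bin(ℓ, ℓ−j; Z) · ( (1−t⁻¹Z q^{−(ℓ−j)}) / (1−t⁻¹Z q^{−(ℓ−2j)}) ) = t^{ℓ−j} · Bin(ℓ, j; Z⁻¹) · ( (1−tZ⁻¹ q^{ℓ−j}) / (1−tZ⁻¹ q^{ℓ−2j}) ). (This is the identity expressing the symmetry D̃_j^{(−ℓ)}(Y) = t^{1/2} D̃_j^{(ℓ)}(Y⁻¹) between the coefficients of E_{−ℓ}(X)𝟏₀ and E_{ℓ+1}(X)𝟏₀ in the double affine Hecke algebra, with Z = Y⁻².) -/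
/-!
Rational-function identities over `K = ℂ(q,t,Z)` underlying the expansion of
`E_ℓ(X)𝟏₀` and `𝟏₀E_ℓ(X)𝟏₀` in the double affine Hecke algebra of type SL₂
(with `Z` playing the role of `Y⁻²`).
-/

noncomputable section

lemma poch_factor (a : K) (ha : a ≠ 0) (m : ℤ) (n : ℕ) :
    poch (a⁻¹ * q ^ m) n
      = (∏ i ∈ Finset.range n, (-a⁻¹ * q ^ (m + i))) * poch (a * q ^ (-m - n + 1)) n := by
  unfold poch
  rw [← Finset.prod_range_reflect (fun i => 1 - a * q ^ (-m - (n:ℤ) + 1) * q ^ i) n,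
    ← Finset.prod_mul_distrib]
  refine Finset.prod_congr rfl fun i hi => ?_
  simp only [Finset.mem_range] at hi
  have h1 : ((n - 1 - i : ℕ) : ℤ) = (n:ℤ) - 1 - i := by omega
  rw [← zpow_natCast q i, ← zpow_natCast q (n - 1 - i), h1]
  have e1 : q ^ m * q ^ (i:ℤ) = q ^ (m + i) := (zpow_add₀ q_ne _ _).symm
  have e2 : q ^ (-m - (n:ℤ) + 1) * q ^ ((n:ℤ) - 1 - i) = q ^ (-(m + (i:ℤ))) := by
    rw [← zpow_add₀ q_ne, show (-m - (n:ℤ) + 1 + ((n:ℤ) - 1 - i)) = -(m + (i:ℤ)) by ring]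
  have key : a⁻¹ * q ^ (m + (i:ℤ)) * (a * q ^ (-(m + (i:ℤ)))) = 1 := by
    rw [mul_mul_mul_comm, inv_mul_cancel₀ ha, one_mul, ← zpow_add₀ q_ne,
      show (m + (i:ℤ) + -(m + (i:ℤ))) = 0 by ring, zpow_zero]
  linear_combination (-a⁻¹) * e1 + (-(a⁻¹ * a * q ^ (m + (i:ℤ)))) * e2 - key

lemma prod_scale {n : ℕ} (e : K) (f g : ℕ → K) (h : ∀ i < n, f i = e * g i) :
    ∏ i ∈ Finset.range n, f i = e ^ n * ∏ i ∈ Finset.range n, g i := by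
  calc ∏ i ∈ Finset.range n, f i = ∏ i ∈ Finset.range n, (e * g i) :=
        Finset.prod_congr rfl fun i hi => h i (Finset.mem_range.mp hi)
    _ = e ^ n * ∏ i ∈ Finset.range n, g i := by
        rw [Finset.prod_mul_distrib, Finset.prod_const, Finset.card_range]

lemma Bin_inv (j n : ℕ) :
    Bin (j + n) j Z⁻¹ = t ^ ((j:ℤ) - n) * Bin (j + n) n Z := by
  unfold Bin
  simp only [Nat.add_sub_cancel_left, Nat.add_sub_cancel, Nat.cast_add]
  have htZ : (t * Z : K) ≠ 0 := mul_ne_zero t_ne Z_ne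
  have ht'Z : (t⁻¹ * Z : K) ≠ 0 := mul_ne_zero (inv_ne_zero t_ne) Z_ne
  rw [show (t⁻¹ * Z⁻¹ : K) = (t * Z)⁻¹ by rw [mul_inv],
    show ((j:ℤ) + n - 2 * j) = (n:ℤ) - j by ring,
    show (t * Z⁻¹ : K) = (t⁻¹ * Z)⁻¹ by rw [mul_inv, inv_inv],
    show (Z⁻¹ * q : K) = Z⁻¹ * q ^ (1:ℤ) by rw [zpow_one],
    show (Z * q : K) = Z * q ^ (1:ℤ) by rw [zpow_one],
    show ((j:ℤ) + n - 2 * n) = (j:ℤ) - n by ring,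
    poch_factor (t * Z) htZ (1 - (j:ℤ)) n,
    poch_factor (t⁻¹ * Z) ht'Z ((n:ℤ) - j) j,
    poch_factor Z Z_ne 1 n,
    poch_factor Z Z_ne (-(j:ℤ)) j,
    show (-(1 - (j:ℤ)) - n + 1) = (j:ℤ) - n by ring,
    show (-((n:ℤ) - j) - j + 1) = 1 - (n:ℤ) by ring,
    show (-(1:ℤ) - n + 1) = -(n:ℤ) by ring,
    show (-(-(j:ℤ)) - j + 1) = (1:ℤ) by ring]
  rw [prod_scale (t⁻¹ * q ^ (-(j:ℤ)))
      (fun i => -(t * Z)⁻¹ * q ^ (1 - (j:ℤ) + i)) (fun i => -Z⁻¹ * q ^ (1 + (i:ℤ)))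
      (fun i _ => by
        beta_reduce
        rw [mul_inv, show (1 - (j:ℤ) + i) = -(j:ℤ) + (1 + (i:ℤ)) by ring, zpow_add₀ q_ne]
        ring),
    prod_scale (t * q ^ ((n:ℤ)))
      (fun i => -(t⁻¹ * Z)⁻¹ * q ^ ((n:ℤ) - j + i)) (fun i => -Z⁻¹ * q ^ (-(j:ℤ) + i))
      (fun i _ => by
        beta_reduce
        rw [mul_inv, inv_inv, show ((n:ℤ) - j + i) = (n:ℤ) + (-(j:ℤ) + (i:ℤ)) by ring,
          zpow_add₀ q_ne]
        ring)]
  have scalar : (t⁻¹ * q ^ (-(j:ℤ))) ^ n * (t * q ^ (n:ℤ)) ^ j = t ^ ((j:ℤ) - n) := by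
    rw [mul_pow, mul_pow, inv_pow, ← zpow_natCast t n, ← zpow_natCast t j, ← zpow_neg,
      ← zpow_natCast (q ^ (-(j:ℤ))) n, ← zpow_natCast (q ^ (n:ℤ)) j, ← zpow_mul, ← zpow_mul,
      mul_mul_mul_comm, ← zpow_add₀ t_ne, ← zpow_add₀ q_ne,
      show (-(j:ℤ) * n + (n:ℤ) * j) = 0 by ring, zpow_zero, mul_one,
      show (-(n:ℤ) + j) = (j:ℤ) - n by ring]
  have hE1 : (∏ i ∈ Finset.range n, (-Z⁻¹ * q ^ (1 + (i:ℤ)))) ≠ 0 :=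
    Finset.prod_ne_zero_iff.mpr fun i _ =>
      mul_ne_zero (neg_ne_zero.mpr (inv_ne_zero Z_ne)) (zpow_ne_zero _ q_ne)
  have hE2 : (∏ i ∈ Finset.range j, (-Z⁻¹ * q ^ (-(j:ℤ) + (i:ℤ)))) ≠ 0 :=
    Finset.prod_ne_zero_iff.mpr fun i _ =>
      mul_ne_zero (neg_ne_zero.mpr (inv_ne_zero Z_ne)) (zpow_ne_zero _ q_ne)
  generalize (∏ i ∈ Finset.range n, (-Z⁻¹ * q ^ (1 + (i:ℤ)))) = E1 at hE1 ⊢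
  generalize (∏ i ∈ Finset.range j, (-Z⁻¹ * q ^ (-(j:ℤ) + (i:ℤ)))) = E2 at hE2 ⊢
  generalize poch (t⁻¹ * Z * q ^ (1 - (n:ℤ))) j = A1
  generalize poch (t * Z * q ^ ((j:ℤ) - n)) n = A2
  generalize poch (Z * q ^ (1:ℤ)) j = D1
  generalize poch (Z * q ^ (-(n:ℤ))) n = D2
  generalize hc1 : (t⁻¹ * q ^ (-(j:ℤ))) ^ n = c1 at scalar
  generalize hc2 : (t * q ^ ((n:ℤ))) ^ j = c2 at scalar
  rw [show c1 * E1 * A2 * (c2 * E2 * A1) = c1 * c2 * (A2 * A1) * (E1 * E2) by ring,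
    show E1 * D2 * (E2 * D1) = D2 * D1 * (E1 * E2) by ring,
    mul_div_mul_right _ _ (mul_ne_zero hE1 hE2), scalar]
  ring

/-- **The symmetry `D̃_j^{(−ℓ)}(Y) = t^{1/2} D̃_j^{(ℓ)}(Y⁻¹)`**, in the cleared form
`(qt)^j·Bin(ℓ,ℓ−j;Z)·((1−t⁻¹Zq^{−(ℓ−j)})/(1−t⁻¹Zq^{−(ℓ−2j)}))
 = t^{ℓ−j}·Bin(ℓ,j;Z⁻¹)·((1−tZ⁻¹q^{ℓ−j})/(1−tZ⁻¹q^{ℓ−2j}))` for `ℓ ≥ 1`, `0 ≤ j ≤ ℓ`. -/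
theorem Dtilde_symm (l j : ℕ) (hl : 1 ≤ l) (hj : j ≤ l) :
    (q * t) ^ j * Bin l (l - j) Z
        * ((1 - t⁻¹ * Z * q ^ (-((l : ℤ) - j))) / (1 - t⁻¹ * Z * q ^ (-((l : ℤ) - 2 * j))))
      = t ^ ((l : ℤ) - j) * Bin l j Z⁻¹
          * ((1 - t * Z⁻¹ * q ^ ((l : ℤ) - j)) / (1 - t * Z⁻¹ * q ^ ((l : ℤ) - 2 * j))) := by
  obtain ⟨n, rfl⟩ : ∃ n, l = j + n := ⟨l - j, by omega⟩
  rw [Nat.add_sub_cancel_left, Bin_inv j n]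
  simp only [Nat.cast_add]
  rw [show (-((j:ℤ) + n - j)) = -(n:ℤ) by ring,
    show (-((j:ℤ) + n - 2 * j)) = (j:ℤ) - n by ring,
    show ((j:ℤ) + n - j) = (n:ℤ) by ring,
    show ((j:ℤ) + n - 2 * j) = (n:ℤ) - j by ring]
  have hA : (1 - t * Z⁻¹ * q ^ ((n:ℤ))) = (-(t * Z⁻¹ * q ^ ((n:ℤ)))) * (1 - t⁻¹ * Z * q ^ (-(n:ℤ))) := by
    have k1 : q ^ ((n:ℤ)) * q ^ (-(n:ℤ)) = 1 := by
      rw [← zpow_add₀ q_ne, show ((n:ℤ) + -(n:ℤ)) = 0 by ring, zpow_zero]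
    have k2 : t * t⁻¹ = 1 := mul_inv_cancel₀ t_ne
    have k3 : Z⁻¹ * Z = 1 := inv_mul_cancel₀ Z_ne
    linear_combination (-(Z⁻¹ * Z) * (q ^ ((n:ℤ)) * q ^ (-(n:ℤ)))) * k2
      + (-(q ^ ((n:ℤ)) * q ^ (-(n:ℤ)))) * k3 + (-1 : K) * k1
  have hB : (1 - t * Z⁻¹ * q ^ ((n:ℤ) - j)) = (-(t * Z⁻¹ * q ^ ((n:ℤ) - j))) * (1 - t⁻¹ * Z * q ^ ((j:ℤ) - n)) := by
    have k1 : q ^ ((n:ℤ) - j) * q ^ ((j:ℤ) - n) = 1 := by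
      rw [← zpow_add₀ q_ne, show ((n:ℤ) - j + ((j:ℤ) - n)) = 0 by ring, zpow_zero]
    have k2 : t * t⁻¹ = 1 := mul_inv_cancel₀ t_ne
    have k3 : Z⁻¹ * Z = 1 := inv_mul_cancel₀ Z_ne
    linear_combination (-(Z⁻¹ * Z) * (q ^ ((n:ℤ) - j) * q ^ ((j:ℤ) - n))) * k2
      + (-(q ^ ((n:ℤ) - j) * q ^ ((j:ℤ) - n))) * k3 + (-1 : K) * k1
  have hden : (-(t * Z⁻¹ * q ^ ((n:ℤ) - j))) ≠ 0 :=
    neg_ne_zero.mpr (mul_ne_zero (mul_ne_zero t_ne (inv_ne_zero Z_ne)) (zpow_ne_zero _ q_ne))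
  have hq : (-(t * Z⁻¹ * q ^ ((n:ℤ)))) / (-(t * Z⁻¹ * q ^ ((n:ℤ) - j))) = q ^ j := by
    rw [div_eq_iff hden, ← zpow_natCast q j]
    have k : q ^ ((j:ℤ)) * q ^ ((n:ℤ) - j) = q ^ ((n:ℤ)) := by
      rw [← zpow_add₀ q_ne, show ((j:ℤ) + ((n:ℤ) - j)) = (n:ℤ) by ring]
    linear_combination (t * Z⁻¹) * k
  rw [hA, hB, mul_div_mul_comm, hq]
  have hT : t ^ ((n:ℤ)) * t ^ ((j:ℤ) - n) = t ^ j := by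
    rw [← zpow_add₀ t_ne, show ((n:ℤ) + ((j:ℤ) - n)) = (j:ℤ) by ring, zpow_natCast]
  generalize Bin (j + n) n Z = X
  generalize (1 - t⁻¹ * Z * q ^ (-(n:ℤ))) / (1 - t⁻¹ * Z * q ^ ((j:ℤ) - n)) = R
  linear_combination (-(q ^ j * X * R)) * hT

end
end

section
/- For all integers ℓ ≥ 1 and 0 ≤ j ≤ ℓ one has, in K = ℂ(q,t,Z): C_j^{(ℓ)}(Z) = t^{j+1−ℓ} · K̄_j^{(ℓ)}(Z) · ( (t⁻¹Z q^{ℓ−2j};q)_j / (Z q^{ℓ−2j};q)_j ) · ( (Z;q)_{ℓ−j} / (t⁻¹Z;q)_{ℓ−j} ). -/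
set_option synthInstance.maxHeartbeats 1000000
set_option maxHeartbeats 1000000


/-!
Rational-function identities over `K = ℂ(q,t,Z)` underlying the expansion of
`E_ℓ(X)𝟏₀` and `𝟏₀E_ℓ(X)𝟏₀` in the double affine Hecke algebra of type SL₂
(with `Z` playing the role of `Y⁻²`).
-/

noncomputable section

/-- `K̄_j^{(ℓ)}(z) = t^{ℓ−1−j}·[ℓ j]_{q,t}·Bin(ℓ,j;z)·((1−zq^{ℓ−2j})/(1−t⁻¹zq^{ℓ−2j}))·((1−t⁻¹z)/(1−z))`,
equal to `t^{(ℓ−1)/2} K_j^{(ℓ)}(Y)` of the paper under `z = Y⁻²`. -/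
def Kbar (l j : ℕ) (z : K) : K :=
  t ^ ((l : ℤ) - 1 - j) * qtBinom l j * Bin l j z
    * ((1 - z * q ^ ((l : ℤ) - 2 * j)) / (1 - t⁻¹ * z * q ^ ((l : ℤ) - 2 * j)))
    * ((1 - t⁻¹ * z) / (1 - z))

/-- The universal Littlewood–Richardson coefficient
`C_j^{(ℓ)}(z) = [ℓ j]_{q,t}·(t⁻¹zq^{−(j−1)};q)_j·(tzq^{ℓ−2j};q)_j
/((zq^{ℓ−2j+1};q)_j·(zq^{−j};q)_j)`. -/
def Ccoef (l j : ℕ) (z : K) : K :=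
  qtBinom l j * (poch (t⁻¹ * z * q ^ (1 - (j : ℤ))) j * poch (t * z * q ^ ((l : ℤ) - 2 * j)) j)
    / (poch (z * q ^ ((l : ℤ) - 2 * j + 1)) j * poch (z * q ^ (-(j : ℤ))) j)

lemma algK_inj : Function.Injective (algebraMap (MvPolynomial (Fin 3) ℂ) K) :=
  IsFractionRing.injective _ _

lemma Zq_ne_q (a b : ℕ) : Z * q ^ a ≠ q ^ b := by
  intro h
  have h2 : (MvPolynomial.X 2 * MvPolynomial.X 0 ^ a : MvPolynomial (Fin 3) ℂ)
      = MvPolynomial.X 0 ^ b := by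
    apply algK_inj
    simpa [Z, q, map_mul, map_pow] using h
  have h3 := congrArg (MvPolynomial.eval (fun i : Fin 3 => if i = 0 then 1 else 3 : Fin 3 → ℂ)) h2
  simp at h3

lemma Zq_ne_tq (a b : ℕ) : Z * q ^ a ≠ t * q ^ b := by
  intro h
  have h2 : (MvPolynomial.X 2 * MvPolynomial.X 0 ^ a : MvPolynomial (Fin 3) ℂ)
      = MvPolynomial.X 1 * MvPolynomial.X 0 ^ b := by
    apply algK_inj
    simpa [Z, q, t, map_mul, map_pow] using h
  have h3 := congrArg (MvPolynomial.eval
    (fun i : Fin 3 => if i = 0 then 1 else if i = 1 then 2 else 3 : Fin 3 → ℂ)) h2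
  simp at h3

lemma Zq_eq_aux {c : K} (e : ℤ) (h1 : Z * q ^ e = c)
    (hc : ∀ a b : ℕ, Z * q ^ a ≠ c * q ^ b) : False := by
  rcases le_or_gt 0 e with he | he
  · refine hc e.toNat 0 ?_
    rw [← zpow_natCast q e.toNat, Int.toNat_of_nonneg he, h1]; simp
  · have hq' : q ^ e ≠ 0 := zpow_ne_zero _ q_ne
    refine hc 0 (-e).toNat ?_
    have key : Z * (q:K) ^ (0:ℕ) * q ^ e = c * q ^ (-e).toNat * q ^ e := by
      rw [pow_zero, mul_one, h1, mul_assoc, ← zpow_natCast q ((-e).toNat),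
        Int.toNat_of_nonneg (by omega), ← zpow_add₀ q_ne]
      norm_num
    exact mul_right_cancel₀ hq' key

lemma G_ne (e : ℤ) : (1 : K) - Z * q ^ e ≠ 0 := by
  intro h
  refine Zq_eq_aux (c := 1) e (by linear_combination -h) (fun a b hab => ?_)
  rw [one_mul] at hab
  exact Zq_ne_q a b hab

lemma F_ne (e : ℤ) : (1 : K) - t⁻¹ * Z * q ^ e ≠ 0 := by
  intro h
  have h1 : Z * q ^ e = t := by
    have ht := t_ne
    field_simp at h
    linear_combination -h
  exact Zq_eq_aux e h1 (fun a b hab => Zq_ne_tq a b hab)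

open Finset in
lemma prodIcoK (f : ℤ → K) {m n k : ℤ} (h1 : m ≤ n) (h2 : n ≤ k) :
    (∏ i ∈ Ico m n, f i) * ∏ i ∈ Ico n k, f i = ∏ i ∈ Ico m k, f i := by
  rw [← Finset.prod_union (Finset.Ico_disjoint_Ico_consecutive m n k),
    Finset.Ico_union_Ico_eq_Ico h1 h2]

open Finset in
lemma prodSingK (f : ℤ → K) (x : ℤ) : ∏ i ∈ Ico x (x+1), f i = f x := by
  rw [show Finset.Ico x (x+1) = {x} by ext; simp; omega, Finset.prod_singleton]

open Finset in
lemma poch_zpow (c : K) (s : ℤ) (n : ℕ) :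
    poch (c * q ^ s) n = ∏ e ∈ Ico s (s + (n : ℤ)), (1 - c * q ^ e) := by
  induction n with
  | zero => simp [poch]
  | succ m ih =>
    rw [poch, Finset.prod_range_succ, ← poch, ih]
    have hsplit := prodIcoK (fun e => 1 - c * q ^ e) (show s ≤ s + (m:ℤ) by omega)
      (show s + (m:ℤ) ≤ s + (m:ℤ) + 1 by omega)
    rw [prodSingK] at hsplit
    push_cast
    rw [show s + ((m:ℤ) + 1) = s + (m:ℤ) + 1 by ring, ← hsplit]
    congr 1
    rw [mul_assoc, ← zpow_natCast q m, ← zpow_add₀ q_ne]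

open Finset in
lemma coreK (f : ℤ → K) {β γ δ : ℤ} (h1 : β ≤ γ) (h2 : γ ≤ δ) :
    f γ * ∏ e ∈ Ico β δ, f e
      = (∏ e ∈ Ico (β+1) (γ+1), f e) * f β * ∏ e ∈ Ico γ δ, f e := by
  rw [← prodIcoK f h1 h2, ← mul_assoc]
  congr 1
  rw [mul_comm (f γ), ← prodSingK f γ, prodIcoK f h1 (by omega),
    ← prodIcoK f (by omega : β ≤ β + 1) (by omega : β + 1 ≤ γ + 1), prodSingK]
  ring

open Finset in
lemma lemAK (f : ℤ → K) {α β γ δ : ℤ} (hab : α ≤ β + 1) (hag : α ≤ γ + 1)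
    (hbd : β ≤ δ) (hgd : γ ≤ δ) :
    (∏ e ∈ Ico α (β+1), f e) * f γ * ∏ e ∈ Ico β δ, f e
      = (∏ e ∈ Ico α (γ+1), f e) * f β * ∏ e ∈ Ico γ δ, f e := by
  wlog hbg : β ≤ γ with H
  · exact (H f hag hab hgd hbd (by omega)).symm
  rw [← prodIcoK f hab (by omega : β + 1 ≤ γ + 1), mul_assoc, coreK f hbg hgd]
  ring

open Finset in
lemma lemBK (f : ℤ → K) {β γ δ : ℤ} (hbd : β ≤ δ) (hgd : γ ≤ δ) :
    (∏ e ∈ Ico (γ+1) (δ+1), f e) * f γ * ∏ e ∈ Ico β δ, f e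
      = (∏ e ∈ Ico (β+1) (δ+1), f e) * f β * ∏ e ∈ Ico γ δ, f e := by
  wlog hbg : β ≤ γ with H
  · exact (H f hgd hbd (by omega)).symm
  rw [← prodIcoK f (by omega : β + 1 ≤ γ + 1) (by omega : γ + 1 ≤ δ + 1),
    mul_assoc, coreK f hbg hgd]
  ring

/-- **The identity `KtoC`**: for `ℓ ≥ 1` and `0 ≤ j ≤ ℓ`,
`C_j^{(ℓ)}(Z) = t^{j+1−ℓ}·K̄_j^{(ℓ)}(Z)·((t⁻¹Zq^{ℓ−2j};q)_j/(Zq^{ℓ−2j};q)_j)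
·((Z;q)_{ℓ−j}/(t⁻¹Z;q)_{ℓ−j})`. -/
theorem Ccoef_from_Kbar (l j : ℕ) (hl : 1 ≤ l) (hj : j ≤ l) :
    Ccoef l j Z
      = t ^ ((j : ℤ) + 1 - l) * Kbar l j Z
          * (poch (t⁻¹ * Z * q ^ ((l : ℤ) - 2 * j)) j / poch (Z * q ^ ((l : ℤ) - 2 * j)) j)
          * (poch Z (l - j) / poch (t⁻¹ * Z) (l - j)) := by
  have hj' : (j : ℤ) ≤ l := by exact_mod_cast hj
  have e3 : poch (Z * q) (l - j) = ∏ e ∈ Finset.Ico (1:ℤ) (1 + ((l - j : ℕ) : ℤ)), (1 - Z * q ^ e) := by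
    conv_lhs => rw [show (q:K) = q ^ (1:ℤ) from (zpow_one q).symm]
    exact poch_zpow Z 1 (l - j)
  have e8 : poch Z (l - j) = ∏ e ∈ Finset.Ico (0:ℤ) (0 + ((l - j : ℕ) : ℤ)), (1 - Z * q ^ e) := by
    conv_lhs => rw [show (Z:K) = Z * q ^ (0:ℤ) by simp]
    exact poch_zpow Z 0 (l - j)
  have e9 : poch (t⁻¹ * Z) (l - j)
      = ∏ e ∈ Finset.Ico (0:ℤ) (0 + ((l - j : ℕ) : ℤ)), (1 - t⁻¹ * Z * q ^ e) := by
    conv_lhs => rw [show (t⁻¹ * Z : K) = t⁻¹ * Z * q ^ (0:ℤ) by simp]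
    exact poch_zpow (t⁻¹ * Z) 0 (l - j)
  simp only [Ccoef, Kbar, Bin, poch_zpow, e3, e8, e9]
  rw [show (1 - (j:ℤ) + (j:ℤ)) = 1 by ring,
    show (1 - (j:ℤ) + ((l - j : ℕ) : ℤ)) = (l:ℤ) - 2*j + 1 by omega,
    show ((l:ℤ) - 2*j + (j:ℤ)) = (l:ℤ) - j by ring,
    show ((l:ℤ) - 2*j + 1 + (j:ℤ)) = (l:ℤ) - j + 1 by ring,
    show (-(j:ℤ) + (j:ℤ)) = 0 by ring,
    show ((1:ℤ) + ((l - j : ℕ) : ℤ)) = (l:ℤ) - j + 1 by omega,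
    show ((0:ℤ) + ((l - j : ℕ) : ℤ)) = (l:ℤ) - j by omega,
    show ((j:ℤ) + 1 - (l:ℤ)) = -((l:ℤ) - 1 - (j:ℤ)) by ring, zpow_neg]
  have hF := lemAK (fun e => 1 - t⁻¹ * Z * q ^ e) (α := 1 - (j:ℤ)) (β := 0)
    (γ := (l:ℤ) - 2*j) (δ := (l:ℤ) - j) (by omega) (by omega) (by omega) (by omega)
  have hG := (lemBK (fun e => 1 - Z * q ^ e) (β := 0) (γ := (l:ℤ) - 2*j)
    (δ := (l:ℤ) - j) (by omega) (by omega)).symm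
  simp only [zpow_zero, mul_one, zero_add] at hF hG
  set PFa := ∏ e ∈ Finset.Ico (1 - (j:ℤ)) 1, (1 - t⁻¹ * Z * q ^ e) with hPFa
  set PFe := ∏ e ∈ Finset.Ico (1 - (j:ℤ)) ((l:ℤ) - 2*j + 1), (1 - t⁻¹ * Z * q ^ e) with hPFe
  set PFg := ∏ e ∈ Finset.Ico ((l:ℤ) - 2*j) ((l:ℤ) - j), (1 - t⁻¹ * Z * q ^ e) with hPFg
  set PF0 := ∏ e ∈ Finset.Ico (0:ℤ) ((l:ℤ) - j), (1 - t⁻¹ * Z * q ^ e) with hPF0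
  set PGc := ∏ e ∈ Finset.Ico ((l:ℤ) - 2*j + 1) ((l:ℤ) - j + 1), (1 - Z * q ^ e) with hPGc
  set PGd := ∏ e ∈ Finset.Ico (-(j:ℤ)) 0, (1 - Z * q ^ e) with hPGd
  set PGf := ∏ e ∈ Finset.Ico (1:ℤ) ((l:ℤ) - j + 1), (1 - Z * q ^ e) with hPGf
  set PGg := ∏ e ∈ Finset.Ico ((l:ℤ) - 2*j) ((l:ℤ) - j), (1 - Z * q ^ e) with hPGg
  set PG0 := ∏ e ∈ Finset.Ico (0:ℤ) ((l:ℤ) - j), (1 - Z * q ^ e) with hPG0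
  set B := ∏ e ∈ Finset.Ico ((l:ℤ) - 2*j) ((l:ℤ) - j), (1 - t * Z * q ^ e) with hB
  set u1 := (1:K) - Z * q ^ ((l:ℤ) - 2*j) with hu1d
  set u2 := (1:K) - t⁻¹ * Z * q ^ ((l:ℤ) - 2*j) with hu2d
  set u3 := (1:K) - t⁻¹ * Z with hu3d
  set u4 := (1:K) - Z with hu4d
  set Qb := qtBinom l j with hQb
  set T := t ^ ((l:ℤ) - 1 - (j:ℤ)) with hT
  clear_value PFa PFe PFg PF0 PGc PGd PGf PGg PG0 B u1 u2 u3 u4 Qb T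
  have hPGcne : PGc ≠ 0 := by rw [hPGc]; exact Finset.prod_ne_zero_iff.mpr fun e _ => G_ne e
  have hPGdne : PGd ≠ 0 := by rw [hPGd]; exact Finset.prod_ne_zero_iff.mpr fun e _ => G_ne e
  have hPGfne : PGf ≠ 0 := by rw [hPGf]; exact Finset.prod_ne_zero_iff.mpr fun e _ => G_ne e
  have hPGgne : PGg ≠ 0 := by rw [hPGg]; exact Finset.prod_ne_zero_iff.mpr fun e _ => G_ne e
  have hPF0ne : PF0 ≠ 0 := by rw [hPF0]; exact Finset.prod_ne_zero_iff.mpr fun e _ => F_ne e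
  have hu2 : u2 ≠ 0 := by rw [hu2d]; exact F_ne _
  have hu4 : u4 ≠ 0 := by rw [hu4d]; simpa using G_ne 0
  have hTne : T ≠ 0 := by rw [hT]; exact zpow_ne_zero _ t_ne
  field_simp
  linear_combination (Qb * B * (PGf * u4 * PGg)) * hF
    + (Qb * B * (PFe * u3 * PFg)) * hG


end
end

section
/- For all integers ℓ ≥ 1 and 0 ≤ j ≤ ℓ−1 one has, in K = ℂ(q,t,Z): A_j^{(ℓ)}(Z) = t^{1−ℓ+j} · D̄_j^{(ℓ−1)}(Z) · ( (t⁻¹Z q^{ℓ−2j};q)_j / (Z q^{ℓ−2j};q)_j ) · ( (Z;q)_{ℓ−j} / (t⁻¹Z;q)_{ℓ−j} ) · ( (1−t⁻¹Z)/(1−Z) ). -/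
/-!
Rational-function identities over `K = ℂ(q,t,Z)` underlying the expansion of
`E_ℓ(X)𝟏₀` and `𝟏₀E_ℓ(X)𝟏₀` in the double affine Hecke algebra of type SL₂
(with `Z` playing the role of `Y⁻²`).
-/

noncomputable section

set_option maxHeartbeats 2000000
set_option synthInstance.maxHeartbeats 1000000

/-- `D̄_j^{(ℓ)}(z) = t^{ℓ−j}·[ℓ j]_{q,t}·Bin(ℓ,j;z)·((1−tq^{ℓ−j})/(1−tq^ℓ))·((1−tzq^{ℓ−j})/(1−tzq^{ℓ−2j}))`,
equal to `t^{(ℓ+1)/2} D_j^{(ℓ)}(Y)` of the paper under `z = Y⁻²`. -/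
def Dbar (l j : ℕ) (z : K) : K :=
  t ^ ((l : ℤ) - j) * qtBinom l j * Bin l j z
    * ((1 - t * q ^ ((l : ℤ) - j)) / (1 - t * q ^ l))
    * ((1 - t * z * q ^ ((l : ℤ) - j)) / (1 - t * z * q ^ ((l : ℤ) - 2 * j)))

/-- The universal coefficient
`A_j^{(ℓ)}(z) = [ℓ j]_{q,t}·((1−q^{ℓ−j})/(1−q^ℓ))·(t⁻¹zq^{−(j−1)};q)_j·(tzq^{ℓ−2j};q)_j
/((zq^{−j};q)_j·(zq^{ℓ−2j};q)_j)`. -/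
def Acoef (l j : ℕ) (z : K) : K :=
  qtBinom l j * ((1 - q ^ ((l : ℤ) - j)) / (1 - q ^ l))
    * (poch (t⁻¹ * z * q ^ (1 - (j : ℤ))) j * poch (t * z * q ^ ((l : ℤ) - 2 * j)) j)
    / (poch (z * q ^ (-(j : ℤ))) j * poch (z * q ^ ((l : ℤ) - 2 * j)) j)

lemma mono_nat_inj (a b c a' b' c' : ℕ)
    (h : q ^ a * t ^ b * Z ^ c = q ^ a' * t ^ b' * Z ^ c') :
    a = a' ∧ b = b' ∧ c = c' := by
  have hi := IsFractionRing.injective (MvPolynomial (Fin 3) ℂ) K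
  simp only [q, t, Z, ← map_pow, ← map_mul] at h
  have h2 := hi h
  rw [MvPolynomial.X_pow_eq_monomial, MvPolynomial.X_pow_eq_monomial,
      MvPolynomial.X_pow_eq_monomial, MvPolynomial.X_pow_eq_monomial,
      MvPolynomial.X_pow_eq_monomial, MvPolynomial.X_pow_eq_monomial,
      MvPolynomial.monomial_mul, MvPolynomial.monomial_mul,
      MvPolynomial.monomial_mul, MvPolynomial.monomial_mul] at h2
  rw [MvPolynomial.monomial_eq_monomial_iff] at h2
  rcases h2 with ⟨hs, -⟩ | ⟨h1, -⟩
  · refine ⟨?_, ?_, ?_⟩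
    · have := DFunLike.congr_fun hs 0
      simpa using this
    · have := DFunLike.congr_fun hs 1
      simpa using this
    · have := DFunLike.congr_fun hs 2
      simpa using this
  · simp at h1

lemma mono_zpow_eq_one {a b c : ℤ} (h : q ^ a * t ^ b * Z ^ c = 1) :
    a = 0 ∧ b = 0 ∧ c = 0 := by
  have key : q ^ (a.toNat) * t ^ (b.toNat) * Z ^ (c.toNat)
      = q ^ ((-a).toNat) * t ^ ((-b).toNat) * Z ^ ((-c).toNat) := by
    have ea : (a.toNat : ℤ) = a + (-a).toNat := by omega
    have eb : (b.toNat : ℤ) = b + (-b).toNat := by omega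
    have ec : (c.toNat : ℤ) = c + (-c).toNat := by omega
    have : q ^ ((a.toNat : ℤ)) * t ^ ((b.toNat : ℤ)) * Z ^ ((c.toNat : ℤ))
        = q ^ ((((-a).toNat : ℕ) : ℤ)) * t ^ (((-b).toNat : ℤ)) * Z ^ (((-c).toNat : ℤ)) := by
      rw [ea, eb, ec, zpow_add₀ q_ne, zpow_add₀ t_ne, zpow_add₀ Z_ne]
      calc q ^ a * q ^ (((-a).toNat : ℤ)) * (t ^ b * t ^ (((-b).toNat : ℤ)))
            * (Z ^ c * Z ^ (((-c).toNat : ℤ)))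
          = (q ^ a * t ^ b * Z ^ c) * (q ^ (((-a).toNat : ℤ)) * t ^ (((-b).toNat : ℤ))
            * Z ^ (((-c).toNat : ℤ))) := by ring
        _ = q ^ (((-a).toNat : ℤ)) * t ^ (((-b).toNat : ℤ)) * Z ^ (((-c).toNat : ℤ)) := by
            rw [h, one_mul]
    simpa only [zpow_natCast] using this
  obtain ⟨h1, h2, h3⟩ := mono_nat_inj _ _ _ _ _ _ key
  omega

lemma one_sub_mono_ne {a b c : ℤ} (h : ¬(a = 0 ∧ b = 0 ∧ c = 0)) :
    (1 : K) - q ^ a * t ^ b * Z ^ c ≠ 0 := by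
  intro hc
  have : q ^ a * t ^ b * Z ^ c = 1 := by linear_combination -hc
  exact h (mono_zpow_eq_one this)

lemma poch_succ (a : K) (n : ℕ) : poch a (n + 1) = poch a n * (1 - a * q ^ n) :=
  Finset.prod_range_succ _ n

lemma poch_succ' (a : K) (n : ℕ) : poch a (n + 1) = (1 - a) * poch (a * q) n := by
  unfold poch
  rw [Finset.prod_range_succ' (fun i => 1 - a * q ^ i) n]
  rw [mul_comm]
  congr 1
  · norm_num
  · apply Finset.prod_congr rfl
    intro i _
    rw [pow_succ]
    ring

lemma poch_step (a : K) (n : ℕ) :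
    poch a n * (1 - a * q ^ n) = (1 - a) * poch (a * q) n := by
  rw [← poch_succ, poch_succ']

lemma poch_concat (a : K) (m n : ℕ) :
    poch a (m + n) = poch a m * poch (a * q ^ m) n := by
  unfold poch
  rw [Finset.prod_range_add]
  congr 1
  apply Finset.prod_congr rfl
  intro i _
  rw [pow_add]
  ring

lemma factor_ne {b c : ℤ} (a : ℤ) (h : ¬(b = 0 ∧ c = 0)) (i : ℕ) :
    1 - q ^ a * t ^ b * Z ^ c * q ^ i ≠ 0 := by
  have : q ^ a * t ^ b * Z ^ c * q ^ i = q ^ (a + i) * t ^ b * Z ^ c := by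
    rw [zpow_add₀ q_ne, zpow_natCast]; ring
  rw [this]
  exact one_sub_mono_ne (by tauto)

lemma poch_mono_ne {b c : ℤ} (a : ℤ) (h : ¬(b = 0 ∧ c = 0)) (n : ℕ) :
    poch (q ^ a * t ^ b * Z ^ c) n ≠ 0 := by
  unfold poch
  rw [Finset.prod_ne_zero_iff]
  intro i _
  exact factor_ne a h i

lemma poch_q_ne (n : ℕ) : poch q n ≠ 0 := by
  unfold poch
  rw [Finset.prod_ne_zero_iff]
  intro i _
  have h := one_sub_mono_ne (a := (i : ℤ) + 1) (b := 0) (c := 0) (by simp; omega)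
  have e : q ^ ((i : ℤ) + 1) * t ^ (0 : ℤ) * Z ^ (0 : ℤ) = q * q ^ i := by
    rw [zpow_add₀ q_ne, zpow_natCast]; simp; ring
  rwa [e] at h

lemma poch_t_ne (n : ℕ) : poch t n ≠ 0 := by
  unfold poch
  rw [Finset.prod_ne_zero_iff]
  intro i _
  have h := one_sub_mono_ne (a := (i : ℤ)) (b := 1) (c := 0) (by simp)
  have e : q ^ ((i : ℤ)) * t ^ (1 : ℤ) * Z ^ (0 : ℤ) = t * q ^ i := by
    rw [zpow_natCast]; simp; ring
  rwa [e] at h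

lemma poch_Zq_ne (a : ℤ) (n : ℕ) : poch (Z * q ^ a) n ≠ 0 := by
  have e : Z * q ^ a = q ^ a * t ^ (0 : ℤ) * Z ^ (1 : ℤ) := by simp; ring
  rw [e]; exact poch_mono_ne a (by simp) n

lemma poch_Z_ne (n : ℕ) : poch Z n ≠ 0 := by
  have e : Z = q ^ (0 : ℤ) * t ^ (0 : ℤ) * Z ^ (1 : ℤ) := by simp
  rw [e]; exact poch_mono_ne 0 (by simp) n

lemma poch_Zq1_ne (n : ℕ) : poch (Z * q) n ≠ 0 := by
  have e : Z * q = q ^ (1 : ℤ) * t ^ (0 : ℤ) * Z ^ (1 : ℤ) := by simp; ring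
  rw [e]; exact poch_mono_ne 1 (by simp) n

lemma poch_tinvZq_ne (a : ℤ) (n : ℕ) : poch (t⁻¹ * Z * q ^ a) n ≠ 0 := by
  have e : t⁻¹ * Z * q ^ a = q ^ a * t ^ (-1 : ℤ) * Z ^ (1 : ℤ) := by
    rw [zpow_neg_one, zpow_one]; ring
  rw [e]; exact poch_mono_ne a (by simp) n

lemma poch_tinvZ_ne (n : ℕ) : poch (t⁻¹ * Z) n ≠ 0 := by
  have e : t⁻¹ * Z = q ^ (0 : ℤ) * t ^ (-1 : ℤ) * Z ^ (1 : ℤ) := by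
    rw [zpow_neg_one, zpow_one]; simp
  rw [e]; exact poch_mono_ne 0 (by simp) n

lemma poch_tinvZq1_ne (n : ℕ) : poch (t⁻¹ * Z * q) n ≠ 0 := by
  have e : t⁻¹ * Z * q = q ^ (1 : ℤ) * t ^ (-1 : ℤ) * Z ^ (1 : ℤ) := by
    rw [zpow_neg_one, zpow_one]; simp; ring
  rw [e]; exact poch_mono_ne 1 (by simp) n

lemma poch_tZq_ne (a : ℤ) (n : ℕ) : poch (t * Z * q ^ a) n ≠ 0 := by
  have e : t * Z * q ^ a = q ^ a * t ^ (1 : ℤ) * Z ^ (1 : ℤ) := by simp; ring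
  rw [e]; exact poch_mono_ne a (by simp) n

lemma one_sub_tq_ne (a : ℤ) : 1 - t * q ^ a ≠ 0 := by
  have e : t * q ^ a = q ^ a * t ^ (1 : ℤ) * Z ^ (0 : ℤ) := by simp; ring
  rw [e]; exact one_sub_mono_ne (by simp)

lemma one_sub_tZq_ne (a : ℤ) : 1 - t * Z * q ^ a ≠ 0 := by
  have e : t * Z * q ^ a = q ^ a * t ^ (1 : ℤ) * Z ^ (1 : ℤ) := by simp; ring
  rw [e]; exact one_sub_mono_ne (by simp)

lemma one_sub_q_ne (a : ℤ) (h : a ≠ 0) : 1 - q ^ a ≠ 0 := by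
  have e : q ^ a = q ^ a * t ^ (0 : ℤ) * Z ^ (0 : ℤ) := by simp
  rw [e]; exact one_sub_mono_ne (by tauto)

lemma one_sub_Z_ne : 1 - Z ≠ 0 := by
  have e : Z = q ^ (0 : ℤ) * t ^ (0 : ℤ) * Z ^ (1 : ℤ) := by simp
  rw [e]; exact one_sub_mono_ne (by simp)

lemma one_sub_tinvZ_ne : 1 - t⁻¹ * Z ≠ 0 := by
  have e : t⁻¹ * Z = q ^ (0 : ℤ) * t ^ (-1 : ℤ) * Z ^ (1 : ℤ) := by
    rw [zpow_neg_one, zpow_one]; simp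
  rw [e]; exact one_sub_mono_ne (by simp)

lemma aux {F : Type*} [Field F] (t Z q u a b s x1 x2 x3 y1 y2 y3 z1 z2 z3 z4 z5 z6 z7 v : F)
    (k1 : x1 ≠ 0) (k2 : x2 ≠ 0) (k4 : y1 ≠ 0) (k5 : y2 ≠ 0) (k6 : y3 ≠ 0) (k7 : z2 ≠ 0)
    (k8 : z4 ≠ 0) (k9 : z5 ≠ 0) (k10 : z6 ≠ 0) (k11 : z7 ≠ 0) (k12 : 1 - t * Z * u ≠ 0)
    (k13 : 1 - Z ≠ 0) (k14 : v ≠ 0) (k15 : 1 - q * b ≠ 0)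
    (k16 : 1 - q * (a * b) ≠ 0) (k17 : 1 - t * b ≠ 0) (k18 : 1 - t * (a * b) ≠ 0)
    (k19 : t ≠ 0) (ks : s ≠ 0) :
    x3 * (1 - q * (a * b)) / (y3 * (1 - t * (a * b))) /
          (x1 / y1 * (x2 * (1 - q * b) / (y2 * (1 - t * b)))) *
        ((1 - b * q) / (1 - a * b * q)) *
        (z1 * (z3 * (1 - t * Z * b) / (1 - t * Z * u))) / (z4 * z5)
      = s⁻¹ *
            (s * (x3 / y3 / (x1 / y1 * (x2 / y2))) * (z2 * z3 / (z6 * z4)) *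
                ((1 - t * b) / (1 - t * (a * b))) *
              ((1 - t * Z * b) / (1 - t * Z * u))) *
          (z1 * z7 / z2 / z5) *
        ((1 - Z) * z6 / (v * z7)) *
      (v / (1 - Z)) := by
  have k15' : 1 - b * q ≠ 0 := by rwa [mul_comm]
  have k16' : 1 - a * b * q ≠ 0 := by rwa [mul_comm q (a*b)] at k16
  simp only [inv_eq_one_div, div_div_eq_mul_div, div_mul_div_comm, div_div, mul_div_assoc',
    div_mul_eq_mul_div]
  rw [div_eq_div_iff
    (by repeat first | apply mul_ne_zero | assumption | exact one_ne_zero)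
    (by repeat first | apply mul_ne_zero | assumption | exact one_ne_zero)]
  ring

/-- **The identity `DtoA`**: for `ℓ ≥ 1` and `0 ≤ j ≤ ℓ−1`,
`A_j^{(ℓ)}(Z) = t^{1−ℓ+j}·D̄_j^{(ℓ−1)}(Z)·((t⁻¹Zq^{ℓ−2j};q)_j/(Zq^{ℓ−2j};q)_j)
·((Z;q)_{ℓ−j}/(t⁻¹Z;q)_{ℓ−j})·((1−t⁻¹Z)/(1−Z))`. -/
theorem Acoef_from_Dbar (l j : ℕ) (hl : 1 ≤ l) (hj : j ≤ l - 1) :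
    Acoef l j Z
      = t ^ (1 - (l : ℤ) + j) * Dbar (l - 1) j Z
          * (poch (t⁻¹ * Z * q ^ ((l : ℤ) - 2 * j)) j / poch (Z * q ^ ((l : ℤ) - 2 * j)) j)
          * (poch Z (l - j) / poch (t⁻¹ * Z) (l - j))
          * ((1 - t⁻¹ * Z) / (1 - Z)) := by
  obtain ⟨m, rfl⟩ : ∃ m, l = j + m + 1 := ⟨l - 1 - j, by omega⟩
  clear hl hj
  simp only [Acoef, Dbar, Bin, qtBinom]
  have e1 : j + m + 1 - 1 = j + m := by omega
  have e2 : j + m + 1 - j = m + 1 := by omega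
  have e3 : j + m - j = m := by omega
  rw [e1, e2, e3]
  push_cast
  rw [show ((j:ℤ) + m + 1 - j) = ((m+1 : ℕ) : ℤ) from by push_cast; ring]
  rw [show ((j:ℤ) + m + 1 - 2*j) = ((m:ℤ) - j) + 1 from by ring]
  rw [show ((j:ℤ) + m - 2*j) = (m:ℤ) - j from by ring]
  rw [show ((j:ℤ) + m - j) = ((m : ℕ) : ℤ) from by push_cast; ring]
  rw [show (1 - ((j:ℤ) + m + 1) + j) = -((m : ℕ) : ℤ) from by push_cast; ring]
  simp only [zpow_add_one₀ q_ne, zpow_neg, zpow_natCast]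
  set c : ℤ := (m : ℤ) - j with hc
  set A : K := t⁻¹ * Z * q ^ (1 - (j : ℤ)) with hA
  have hA1 : A * q ^ j = t⁻¹ * Z * q := by
    rw [hA, mul_assoc, ← zpow_natCast q j, ← zpow_add₀ q_ne]
    norm_num
  have hA2 : A * q ^ m = t⁻¹ * Z * (q ^ c * q) := by
    rw [hA, hc, mul_assoc, ← zpow_natCast q m, ← zpow_add₀ q_ne, ← zpow_add_one₀ q_ne]
    congr 2
    ring
  have hP2 : poch (t * Z * (q ^ c * q)) j
      = poch (t * Z * q ^ c) j * (1 - t * Z * q ^ c * q ^ j) / (1 - t * Z * q ^ c) := by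
    rw [eq_div_iff (one_sub_tZq_ne c)]
    have hs := poch_step (t * Z * q ^ c) j
    rw [show t * Z * q ^ c * q = t * Z * (q ^ c * q) from by ring] at hs
    linear_combination -hs
  have hP6 : poch (t⁻¹ * Z * (q ^ c * q)) j
      = poch A j * poch (t⁻¹ * Z * q) m / poch A m := by
    rw [eq_div_iff (poch_tinvZq_ne (1 - (j : ℤ)) m), ← hA1, ← hA2,
      mul_comm (poch (A * q ^ m) j) (poch A m), ← poch_concat, add_comm m j, poch_concat]
  rw [poch_succ q (j + m), poch_succ q m, poch_succ t (j + m), poch_succ t m,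
    poch_succ' Z m, poch_succ' (t⁻¹ * Z) m, hP2, hP6]
  have n1 : poch (Z * (q ^ j)⁻¹) j ≠ 0 := by
    rw [show (q ^ j)⁻¹ = q ^ (-(j : ℤ)) from by rw [zpow_neg, zpow_natCast]]
    exact poch_Zq_ne _ j
  have n2 : poch (Z * (q ^ c * q)) j ≠ 0 := by
    rw [← zpow_add_one₀ q_ne]; exact poch_Zq_ne _ j
  have n3 : (1 : K) - q ^ (j + m + 1) ≠ 0 := by
    rw [← zpow_natCast q (j + m + 1)]
    exact one_sub_q_ne _ (by positivity)
  have n4 : (1 : K) - t * q ^ (j + m) ≠ 0 := by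
    rw [← zpow_natCast q (j + m)]; exact one_sub_tq_ne _
  set u : K := q ^ c with hu
  set x1 := poch q j with hx1
  set x2 := poch q m with hx2
  set x3 := poch q (j + m) with hx3
  set y1 := poch t j with hy1
  set y2 := poch t m with hy2
  set y3 := poch t (j + m) with hy3
  set z1 := poch A j with hz1
  set z2 := poch A m with hz2
  set z3 := poch (t * Z * u) j with hz3
  set z4 := poch (Z * (q ^ j)⁻¹) j with hz4
  set z5 := poch (Z * (u * q)) j with hz5
  set z6 := poch (Z * q) m with hz6
  set z7 := poch (t⁻¹ * Z * q) m with hz7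
  have k1 : x1 ≠ 0 := by rw [hx1]; exact poch_q_ne j
  have k2 : x2 ≠ 0 := by rw [hx2]; exact poch_q_ne m
  have k4 : y1 ≠ 0 := by rw [hy1]; exact poch_t_ne j
  have k5 : y2 ≠ 0 := by rw [hy2]; exact poch_t_ne m
  have k6 : y3 ≠ 0 := by rw [hy3]; exact poch_t_ne (j + m)
  have k7 : z2 ≠ 0 := by rw [hz2, hA]; exact poch_tinvZq_ne _ m
  have k10 : z6 ≠ 0 := by rw [hz6]; exact poch_Zq1_ne m
  have k11 : z7 ≠ 0 := by rw [hz7]; exact poch_tinvZq1_ne m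
  have k12 : (1 : K) - t * Z * u ≠ 0 := by rw [hu]; exact one_sub_tZq_ne c
  have k15 : (1 : K) - q * q ^ m ≠ 0 := by
    rw [show q * q ^ m = q ^ (m + 1) from (pow_succ' q m).symm, ← zpow_natCast q (m + 1)]
    exact one_sub_q_ne _ (by positivity)
  have k16 : (1 : K) - q * (q ^ j * q ^ m) ≠ 0 := by
    rw [show q * (q ^ j * q ^ m) = q ^ (j + m + 1) from by rw [← pow_add]; ring]
    exact n3
  have k17 : (1 : K) - t * q ^ m ≠ 0 := by
    rw [← zpow_natCast q m]; exact one_sub_tq_ne _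
  have hub : (1 : K) - t * Z * u * q ^ j = 1 - t * Z * q ^ m := by
    rw [hu, mul_assoc (t * Z)]
    congr 2
    rw [← zpow_natCast q j, ← zpow_natCast q m, ← zpow_add₀ q_ne, hc]
    congr 1
    ring
  rw [show j + m + 1 = (j + m) + 1 from rfl, pow_succ q (j + m), pow_add q j m, pow_succ q m,
    hub]
  exact aux t Z q u (q ^ j) (q ^ m) (t ^ m) x1 x2 x3 y1 y2 y3 z1 z2 z3 z4 z5 z6 z7
    (1 - t⁻¹ * Z) k1 k2 k4 k5 k6 k7 n1 n2 k10 k11 k12 one_sub_Z_ne one_sub_tinvZ_ne k15 k16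
    k17 (by rw [← pow_add]; exact n4) t_ne (pow_ne_zero m t_ne)

end
end
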